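/- Let G be a 2-connected planar graph, C_7-free, containing a copy of T_3 with outer boundary triangle abc, and suppose G ≠ T_3. If a face f of the embedding shares the two boundary edges ab and bc with the T_3 and has length m with 4 ≤ m ≤ 7, then G contains a cycle of length 7. -/

import Mathlib

/-- `G` contains `H` as a minor: branch sets. -/
def HasGraphMinor {V : Type*} {W : Type*} (G : SimpleGraph V) (H : SimpleGraph W) : Prop :=
  ∃ B : W → Set V,
    (∀ w, (B w).Nonempty) ∧
    (∀ w, (G.induce (B w)).Connected) ∧
    (∀ w w', w ≠ w' → Disjoint (B w) (B w')) ∧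
    (∀ w w', H.Adj w w' → ∃ a ∈ B w, ∃ b ∈ B w', G.Adj a b)

/-- Planarity via Wagner's theorem: no `K₅` and no `K₃,₃` minor. -/
def GraphIsPlanar {V : Type*} (G : SimpleGraph V) : Prop :=
  ¬ HasGraphMinor G (⊤ : SimpleGraph (Fin 5)) ∧
  ¬ HasGraphMinor G (completeBipartiteGraph (Fin 3) (Fin 3))

/-- `2`-connectedness: at least 3 vertices and deleting any single vertex leaves the
graph connected. -/
def TwoConnected {V : Type*} [Fintype V] (G : SimpleGraph V) : Prop :=
  3 ≤ Fintype.card V ∧ ∀ v : V, (G.induce {u | u ≠ v}).Connected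

/-- The triangular block `T₃`: outer triangle `0,1,2`, inner triangle `3,4,5`, and each
outer vertex `i` joined to the two inner vertices `3 + j` with `j ≠ i`. It is a planar
graph on 6 vertices with 12 edges, all of whose bounded faces are triangles. -/
def T3 : SimpleGraph (Fin 6) :=
  SimpleGraph.fromRel (fun a b =>
    (a, b) ∈ ([(0, 1), (0, 2), (1, 2), (3, 4), (3, 5), (4, 5),
      (0, 4), (0, 5), (1, 3), (1, 5), (2, 3), (2, 4)] : List (Fin 6 × Fin 6)))

/-!
Deleting the edges `ab` and `bc` from the face leaves a path from `a` to `c` of length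
`m - 2 ∈ {2, 3, 4}` that meets `T₃` only in `a` and `c`. Since `T₃` joins `c` to `a` by paths
of every length from 1 to 5, one of them closes this path into a cycle of length 7.
-/

namespace SimpleGraph.Walk

variable {V U : Type*} {G : SimpleGraph V}

lemma IsCycle.exists_isPath_snd_penultimate {u : V} {C : G.Walk u u} (hC : C.IsCycle) :
    ∃ p : G.Walk C.snd C.penultimate, p.IsPath ∧ p.length + 2 = C.length ∧
      u ∉ p.support ∧ p.support ⊆ C.support := by
  have hlen := length_tail_add_one hC.not_nil
  have h3 := hC.three_le_length
  have hCt : ¬ C.tail.Nil := by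
    rw [← length_eq_zero_iff.not]
    omega
  have hpen : C.tail.penultimate = C.penultimate := by
    simp only [penultimate, getVert_tail]
    congr 1
    omega
  have hsupp : C.tail.support = C.tail.dropLast.support ++ [u] := by
    rw [← support_concat _ (adj_penultimate hCt), concat_dropLast]
  refine ⟨C.tail.dropLast.copy rfl hpen, ?_, ?_, ?_, ?_⟩
  · simpa using hC.isPath_tail.dropLast
  · simp only [length_copy, length_dropLast]
    omega
  · have := hC.isPath_tail.support_nodup
    rw [hsupp, List.nodup_append] at this
    simpa using fun h => this.2.2 u h u (List.mem_singleton_self u) rfl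
  · intro v hv
    rw [support_copy] at hv
    rw [← cons_support_tail hC.not_nil, hsupp]
    simp [hv]

lemma IsCycle.exists_isPath_of_mem_edges [DecidableEq V] {x a b c : V} {C : G.Walk x x}
    (hC : C.IsCycle) (hab : s(a, b) ∈ C.edges) (hbc : s(b, c) ∈ C.edges) (hac : a ≠ c) :
    ∃ p : G.Walk a c, p.IsPath ∧ p.length + 2 = C.length ∧
      b ∉ p.support ∧ p.support ⊆ C.support := by
  have hb : b ∈ C.support := C.fst_mem_support_of_mem_edges hbc
  set D := C.rotate b hb
  have hD : D.IsCycle := hC.rotate hb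
  have hDsupp : D.support ⊆ C.support := fun v hv => (mem_support_rotate_iff C b hb).mp hv
  have hnbr : ∀ v, s(v, b) ∈ C.edges → v = D.snd ∨ v = D.penultimate := by
    intro v hv
    have : v ∈ D.toSubgraph.neighborSet b := by
      rw [Subgraph.mem_neighborSet, toSubgraph_rotate, adj_toSubgraph_iff_mem_edges,
        Sym2.eq_swap]
      exact hv
    simpa [hD.neighborSet_toSubgraph_endpoint] using this
  have key : ∀ E : G.Walk b b, E.IsCycle → E.length = C.length → E.support ⊆ C.support →
      E.snd = a → E.penultimate = c → ∃ p : G.Walk a c, p.IsPath ∧ p.length + 2 = C.length ∧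
        b ∉ p.support ∧ p.support ⊆ C.support := by
    rintro E hE hElen hEsupp rfl rfl
    obtain ⟨p, hp, hplen, hbp, hpsupp⟩ := hE.exists_isPath_snd_penultimate
    exact ⟨p, hp, hElen ▸ hplen, hbp, fun _ hv => hEsupp (hpsupp hv)⟩
  rcases hnbr a hab with rfl | rfl <;> rcases hnbr c (Sym2.eq_swap ▸ hbc) with rfl | rfl
  · exact absurd rfl hac
  · exact key D hD (length_rotate ..) hDsupp rfl rfl
  · exact key D.reverse hD.reverse (by simp [D]) (by simpa using hDsupp)
      (snd_reverse D) (penultimate_reverse D)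
  · exact absurd rfl hac

lemma IsPath.isCycle_append_map {H : SimpleGraph U} {φ : H →g G} (hφ : Function.Injective φ)
    {a c : U} {p : G.Walk (φ a) (φ c)} {q : H.Walk c a} (hp : p.IsPath) (hq : q.IsPath)
    (hmeet : ∀ w, φ w ∈ p.support → w = a ∨ w = c) (hlen : 1 < p.length ∨ 1 < q.length) :
    (p.append (q.map φ)).IsCycle := by
  refine hp.isCycle_append (hq.map hφ) ?_ (by simpa using hlen)
  intro v hvp hvq
  rw [support_map, ← List.map_tail, List.mem_map] at hvq
  obtain ⟨w, hwq, rfl⟩ := hvq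
  have hp' := hp.support_nodup
  have hq' := hq.support_nodup
  rw [← cons_tail_support] at hp' hq'
  rcases hmeet w (List.mem_of_mem_tail hvp) with rfl | rfl
  · exact (List.nodup_cons.mp hp').1 hvp
  · exact (List.nodup_cons.mp hq').1 hwq

end SimpleGraph.Walk

open SimpleGraph Walk

instance : DecidableRel T3.Adj :=
  fun a b => decidable_of_iff _ (SimpleGraph.fromRel_adj _ a b).symm

lemma T3_exists_isPath_two_zero {k : ℕ} (hk₁ : 1 ≤ k) (hk₅ : k ≤ 5) :
    ∃ q : T3.Walk 2 0, q.IsPath ∧ q.length = k := by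
  interval_cases k
  · refine ⟨.cons ?_ .nil, .mk' ?_, ?_⟩ <;> decide
  · refine ⟨.cons (v := 4) ?_ (.cons ?_ .nil), .mk' ?_, ?_⟩ <;> decide
  · refine ⟨.cons (v := 3) ?_ (.cons (v := 4) ?_ (.cons ?_ .nil)), .mk' ?_, ?_⟩ <;> decide
  · refine ⟨.cons (v := 3) ?_ (.cons (v := 5) ?_ (.cons (v := 4) ?_ (.cons ?_ .nil))),
      .mk' ?_, ?_⟩ <;> decide
  · refine ⟨.cons (v := 3) ?_ (.cons (v := 1) ?_ (.cons (v := 5) ?_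
      (.cons (v := 4) ?_ (.cons ?_ .nil)))), .mk' ?_, ?_⟩ <;> decide

theorem T3_small_face_gives_C7_general {V : Type*} (G : SimpleGraph V)
    (φ : T3 →g G) (hφ : Function.Injective φ)
    {x : V} (W : G.Walk x x) (hW : W.IsCycle)
    (hm4 : 4 ≤ W.length) (hm7 : W.length ≤ 7)
    (hab : s(φ 0, φ 1) ∈ W.edges) (hbc : s(φ 1, φ 2) ∈ W.edges)
    (havoid : ∀ u : Fin 6, φ u ∈ W.support → u = 0 ∨ u = 1 ∨ u = 2) :
    ∃ (u : V) (w : G.Walk u u), w.IsCycle ∧ w.length = 7 := by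
  classical
  rcases eq_or_ne W.length 7 with h7 | h7
  · exact ⟨x, W, hW, h7⟩
  obtain ⟨p, hp, hplen, hbp, hpW⟩ := hW.exists_isPath_of_mem_edges hab hbc (hφ.ne (by decide))
  obtain ⟨q, hq, hqlen⟩ := T3_exists_isPath_two_zero (k := 7 - p.length) (by omega) (by omega)
  have hmeet (w : Fin 6) (hw : φ w ∈ p.support) : w = 0 ∨ w = 2 := by
    rcases havoid w (hpW hw) with rfl | rfl | rfl
    · exact .inl rfl
    · exact absurd hw hbp
    · exact .inr rfl
  refine ⟨φ 0, p.append (q.map φ), hp.isCycle_append_map hφ hq hmeet (by omega), ?_⟩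
  rw [length_append, length_map]
  omega

/-- Let `G` be a `2`-connected, `C₇`-free planar graph containing a
copy of `T₃` (via an injective homomorphism `φ`) with outer boundary triangle
`φ 0, φ 1, φ 2`, and suppose `G` is not isomorphic to `T₃`. If a face `f` of the
embedding — a cycle `W` of `G` whose only `T₃`-vertices are among `φ 0, φ 1, φ 2` —
shares the two boundary edges `φ 0 φ 1` and `φ 1 φ 2` with the `T₃` and has length `m`
with `4 ≤ m ≤ 7`, then `G` contains a cycle of length 7. -/
theorem T3_small_face_gives_C7 {V : Type*} [Fintype V] (G : SimpleGraph V)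
    (hplanar : GraphIsPlanar G) (h2con : TwoConnected G)
    (hC7free : ∀ (u : V) (w : G.Walk u u), w.IsCycle → w.length ≠ 7)
    (φ : T3 →g G) (hφ : Function.Injective φ)
    (hne : ¬ Nonempty (G ≃g T3))
    {x : V} (W : G.Walk x x) (hW : W.IsCycle)
    (hm4 : 4 ≤ W.length) (hm7 : W.length ≤ 7)
    (hab : s(φ 0, φ 1) ∈ W.edges) (hbc : s(φ 1, φ 2) ∈ W.edges)
    (havoid : ∀ u : Fin 6, φ u ∈ W.support → u = 0 ∨ u = 1 ∨ u = 2) :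
    ∃ (u : V) (w : G.Walk u u), w.IsCycle ∧ w.length = 7 :=
  T3_small_face_gives_C7_general G φ hφ W hW hm4 hm7 hab hbc havoid
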